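/- Fix a bijective enumeration (q_i)_{i≥1} of the rational numbers in (0,1) and let f(x) = Σ_{i : q_i < x} 2^{−i} for x ∈ [0,1]. Let k ≥ 1 and let G₁,…,G_k : [0,1] → ℝ be continuous functions. Then g = Σ_{j=1}^k G_j · f^j is left-continuous at every x ∈ (0,1], has both one-sided limits at every x ∈ (0,1), is continuous at every point not equal to any q_i, and for each i its one-sided limits at q_i are g(q_i⁺) = Σ_{j=1}^k G_j(q_i)(f(q_i) + 2^{−i})^j and g(q_i⁻) = Σ_{j=1}^k G_j(q_i) f(q_i)^j. If moreover each G_j has bounded variation on [0,1], then g has bounded variation on [0,1]. -/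

import Mathlib

open Set Filter Topology

/-- `jumpF q x = Σ_{i : q i < x} 2^{-i}`, where `(q_i)_{i ≥ 1}` is an enumeration of the
rationals of `(0,1)`. -/
noncomputable def jumpF (q : ℕ+ → ℝ) (x : ℝ) : ℝ :=
  ∑' i : ℕ+, if q i < x then (1 / 2 : ℝ) ^ (i : ℕ) else 0

namespace Stmt12Aux

lemma g0_summable : Summable (fun i : ℕ+ => (1 / 2 : ℝ) ^ (i : ℕ)) := by
  have h : Summable (fun n : ℕ => (1 / 2 : ℝ) ^ n) :=
    summable_geometric_of_lt_one (by norm_num) (by norm_num)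
  exact h.comp_injective (fun a b hab => PNat.coe_injective hab)

lemma aux_summable (h : ℕ+ → ℝ)
    (hb : ∀ i, h i = 0 ∨ h i = (1 / 2 : ℝ) ^ (i : ℕ)) : Summable h := by
  refine Summable.of_nonneg_of_le (fun i => ?_) (fun i => ?_) g0_summable
  · rcases hb i with h0 | h0 <;> rw [h0]
    all_goals positivity
  · rcases hb i with h0 | h0 <;> rw [h0]
    all_goals first | positivity | exact le_rfl

lemma ite_summable (q : ℕ+ → ℝ) (P : ℕ+ → Prop) [DecidablePred P] :
    Summable (fun i => if P i then (1 / 2 : ℝ) ^ (i : ℕ) else 0) :=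
  aux_summable _ (fun i => by split <;> simp)

variable {q : ℕ+ → ℝ}

lemma jump_mono : Monotone (jumpF q) := by
  intro a b hab
  refine Summable.tsum_le_tsum (fun i => ?_) (ite_summable q _) (ite_summable q _)
  by_cases h : q i < a
  · rw [if_pos h, if_pos (h.trans_le hab)]
  · rw [if_neg h]
    split <;> positivity

lemma jump_nonneg (x : ℝ) : 0 ≤ jumpF q x :=
  tsum_nonneg (fun i => by split <;> positivity)

lemma jump_le (x : ℝ) : jumpF q x ≤ ∑' i : ℕ+, (1 / 2 : ℝ) ^ (i : ℕ) := by
  refine Summable.tsum_le_tsum (fun i => ?_) (ite_summable q _) g0_summable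
  split
  · exact le_rfl
  · positivity

lemma tail_small {ε : ℝ} (hε : 0 < ε) :
    ∃ s : Finset ℕ+, ∑' i : {i : ℕ+ // i ∉ s}, (1 / 2 : ℝ) ^ ((i : ℕ+) : ℕ) < ε :=
  ((tendsto_order.1 (tendsto_tsum_compl_atTop_zero
    (fun i : ℕ+ => (1 / 2 : ℝ) ^ (i : ℕ)))).2 _ hε).exists

lemma tail_eq (s : Finset ℕ+) :
    ∑' i : {i : ℕ+ // i ∉ s}, (1 / 2 : ℝ) ^ ((i : ℕ+) : ℕ)
      = ∑' i : ℕ+, if i ∈ s then 0 else (1 / 2 : ℝ) ^ (i : ℕ) := by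
  calc (∑' i : {i : ℕ+ // i ∉ s}, (1 / 2 : ℝ) ^ ((i : ℕ+) : ℕ))
      = ∑' i : ℕ+, Set.indicator {i : ℕ+ | i ∉ s} (fun i => (1 / 2 : ℝ) ^ (i : ℕ)) i :=
        tsum_subtype {i : ℕ+ | i ∉ s} (fun i => (1 / 2 : ℝ) ^ (i : ℕ))
    _ = ∑' i : ℕ+, if i ∈ s then 0 else (1 / 2 : ℝ) ^ (i : ℕ) := by
        refine tsum_congr (fun i => ?_)
        by_cases hi : i ∈ s <;> simp [Set.indicator_apply, hi]

/-- Left continuity of `jumpF`. -/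
lemma tendsto_left (x : ℝ) : Tendsto (jumpF q) (𝓝[<] x) (𝓝 (jumpF q x)) := by
  rw [Metric.tendsto_nhdsWithin_nhds]
  intro ε hε
  obtain ⟨s, hs⟩ := tail_small hε
  set t : Finset ℝ := insert (x - 1) ((s.filter (fun i => q i < x)).image q) with ht
  have htlt : ∀ z ∈ t, z < x := by
    intro z hz
    rcases Finset.mem_insert.1 hz with rfl | hz
    · linarith
    · obtain ⟨i, hi, rfl⟩ := Finset.mem_image.1 hz
      exact (Finset.mem_filter.1 hi).2
  have hne : t.Nonempty := ⟨x - 1, Finset.mem_insert_self _ _⟩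
  have hmax : t.max' hne < x := htlt _ (t.max'_mem hne)
  refine ⟨x - t.max' hne, by linarith, ?_⟩
  intro y hy hdist
  have hyx : y < x := hy
  rw [Real.dist_eq, abs_lt] at hdist
  have hy0 : t.max' hne < y := by linarith [hdist.1]
  have h1 : jumpF q y ≤ jumpF q x := jump_mono hyx.le
  rw [Real.dist_eq, abs_of_nonpos (by linarith), neg_sub]
  have key : jumpF q x - jumpF q y
      ≤ ∑' i : ℕ+, if i ∈ s then 0 else (1 / 2 : ℝ) ^ (i : ℕ) := by
    rw [jumpF, jumpF, ← Summable.tsum_sub (ite_summable q _) (ite_summable q _)]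
    refine Summable.tsum_le_tsum (fun i => ?_) ((ite_summable q _).sub (ite_summable q _))
      (aux_summable _ (fun i => by split <;> simp))
    by_cases hi : i ∈ s
    · rw [if_pos hi]
      by_cases hqx : q i < x
      · have hqt : q i ∈ t := Finset.mem_insert_of_mem
          (Finset.mem_image.2 ⟨i, Finset.mem_filter.2 ⟨hi, hqx⟩, rfl⟩)
        have hqy : q i < y := lt_of_le_of_lt (Finset.le_max' t _ hqt) hy0
        rw [if_pos hqx, if_pos hqy, sub_self]
      · rw [if_neg hqx, if_neg (fun h => hqx (h.trans hyx))]
        simp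
    · rw [if_neg hi]
      have hA : (if q i < x then (1 / 2 : ℝ) ^ (i : ℕ) else 0) ≤ (1 / 2 : ℝ) ^ (i : ℕ) := by
        split
        · exact le_rfl
        · positivity
      have hB : (0 : ℝ) ≤ if q i < y then (1 / 2 : ℝ) ^ (i : ℕ) else 0 := by
        split <;> positivity
      linarith
  rw [tail_eq] at hs
  linarith

/-- Right limit of `jumpF`. -/
lemma tendsto_right (x : ℝ) :
    Tendsto (jumpF q) (𝓝[>] x)
      (𝓝 (∑' i : ℕ+, if q i ≤ x then (1 / 2 : ℝ) ^ (i : ℕ) else 0)) := by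
  set L : ℝ := ∑' i : ℕ+, if q i ≤ x then (1 / 2 : ℝ) ^ (i : ℕ) else 0 with hL
  rw [Metric.tendsto_nhdsWithin_nhds]
  intro ε hε
  obtain ⟨s, hs⟩ := tail_small hε
  set t : Finset ℝ := insert (x + 1) ((s.filter (fun i => x < q i)).image q) with ht
  have htgt : ∀ z ∈ t, x < z := by
    intro z hz
    rcases Finset.mem_insert.1 hz with rfl | hz
    · linarith
    · obtain ⟨i, hi, rfl⟩ := Finset.mem_image.1 hz
      exact (Finset.mem_filter.1 hi).2
  have hne : t.Nonempty := ⟨x + 1, Finset.mem_insert_self _ _⟩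
  have hmin : x < t.min' hne := htgt _ (t.min'_mem hne)
  refine ⟨t.min' hne - x, by linarith, ?_⟩
  intro y hy hdist
  have hxy : x < y := hy
  rw [Real.dist_eq, abs_lt] at hdist
  have hy0 : y < t.min' hne := by linarith [hdist.2]
  have h1 : L ≤ jumpF q y := by
    refine Summable.tsum_le_tsum (fun i => ?_) (ite_summable q _) (ite_summable q _)
    by_cases h : q i ≤ x
    · rw [if_pos h, if_pos (lt_of_le_of_lt h hxy)]
    · rw [if_neg h]
      split <;> positivity
  rw [Real.dist_eq, abs_of_nonneg (by linarith)]
  have key : jumpF q y - L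
      ≤ ∑' i : ℕ+, if i ∈ s then 0 else (1 / 2 : ℝ) ^ (i : ℕ) := by
    rw [hL, jumpF, ← Summable.tsum_sub (ite_summable q _) (ite_summable q _)]
    refine Summable.tsum_le_tsum (fun i => ?_) ((ite_summable q _).sub (ite_summable q _))
      (aux_summable _ (fun i => by split <;> simp))
    by_cases hi : i ∈ s
    · rw [if_pos hi]
      by_cases hqx : q i ≤ x
      · rw [if_pos hqx, if_pos (lt_of_le_of_lt hqx hxy), sub_self]
      · push_neg at hqx
        have hqt : q i ∈ t := Finset.mem_insert_of_mem
          (Finset.mem_image.2 ⟨i, Finset.mem_filter.2 ⟨hi, hqx⟩, rfl⟩)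
        have hqy : ¬ q i < y := not_lt.2 (le_of_lt (lt_of_lt_of_le hy0 (Finset.min'_le t _ hqt)))
        rw [if_neg hqy, if_neg (not_le.2 hqx), sub_self]
    · rw [if_neg hi]
      have hA : (if q i < y then (1 / 2 : ℝ) ^ (i : ℕ) else 0) ≤ (1 / 2 : ℝ) ^ (i : ℕ) := by
        split
        · exact le_rfl
        · positivity
      have hB : (0 : ℝ) ≤ if q i ≤ x then (1 / 2 : ℝ) ^ (i : ℕ) else 0 := by
        split <;> positivity
      linarith
  rw [tail_eq] at hs
  linarith

lemma right_val (hq_inj : Function.Injective q) (i0 : ℕ+) :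
    (∑' i : ℕ+, if q i ≤ q i0 then (1 / 2 : ℝ) ^ (i : ℕ) else 0)
      = jumpF q (q i0) + (1 / 2 : ℝ) ^ (i0 : ℕ) := by
  have hcong : ∀ i : ℕ+, (if q i ≤ q i0 then (1 / 2 : ℝ) ^ (i : ℕ) else 0)
      = (if q i < q i0 then (1 / 2 : ℝ) ^ (i : ℕ) else 0)
        + (if i = i0 then (1 / 2 : ℝ) ^ (i0 : ℕ) else 0) := by
    intro i
    rcases lt_trichotomy (q i) (q i0) with h | h | h
    · rw [if_pos h.le, if_pos h, if_neg (by rintro rfl; exact lt_irrefl _ h), add_zero]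
    · have : i = i0 := hq_inj h
      subst this
      rw [if_pos h.le, if_neg (lt_irrefl _), if_pos rfl, zero_add]
    · rw [if_neg (not_le.2 h), if_neg (not_lt.2 h.le),
        if_neg (by rintro rfl; exact lt_irrefl _ h), add_zero]
  rw [tsum_congr hcong, Summable.tsum_add (ite_summable q _)
    (aux_summable _ (fun i => by by_cases h : i = i0 <;> simp [h]))]
  congr 1
  exact tsum_ite_eq i0 (fun _ => (1 / 2 : ℝ) ^ (i0 : ℕ))

lemma right_val' (x : ℝ) (h : ∀ i, q i ≠ x) :
    (∑' i : ℕ+, if q i ≤ x then (1 / 2 : ℝ) ^ (i : ℕ) else 0) = jumpF q x := by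
  refine tsum_congr (fun i => ?_)
  have : q i ≤ x ↔ q i < x := ⟨fun hle => lt_of_le_of_ne hle (h i), le_of_lt⟩
  simp only [this]

lemma jump_continuousAt (x : ℝ) (h : ∀ i, q i ≠ x) : ContinuousAt (jumpF q) x := by
  refine continuousAt_iff_continuous_left'_right'.2 ⟨?_, ?_⟩
  · exact tendsto_left x
  · show Tendsto (jumpF q) (𝓝[>] x) (𝓝 (jumpF q x))
    rw [← right_val' x h]
    exact tendsto_right x

/-! ### Bounded variation lemmas -/

lemma bv_combo {f g h : ℝ → ℝ} {s : Set ℝ} {A B : ℝ} (hA : 0 ≤ A) (hB : 0 ≤ B)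
    (hf : BoundedVariationOn f s) (hg : BoundedVariationOn g s)
    (hh : ∀ x ∈ s, ∀ y ∈ s, dist (h x) (h y) ≤ A * dist (f x) (f y) + B * dist (g x) (g y)) :
    BoundedVariationOn h s := by
  have hle : eVariationOn h s
      ≤ ENNReal.ofReal A * eVariationOn f s + ENNReal.ofReal B * eVariationOn g s := by
    refine iSup_le ?_
    rintro ⟨n, u, hu, us⟩
    have step : ∀ i, edist (h (u (i + 1))) (h (u i))
        ≤ ENNReal.ofReal A * edist (f (u (i + 1))) (f (u i))
          + ENNReal.ofReal B * edist (g (u (i + 1))) (g (u i)) := by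
      intro i
      rw [edist_dist, edist_dist, edist_dist,
        ← ENNReal.ofReal_mul hA, ← ENNReal.ofReal_mul hB,
        ← ENNReal.ofReal_add (by positivity) (by positivity)]
      exact ENNReal.ofReal_le_ofReal (hh _ (us _) _ (us _))
    calc ∑ i ∈ Finset.range n, edist (h (u (i + 1))) (h (u i))
        ≤ ∑ i ∈ Finset.range n, (ENNReal.ofReal A * edist (f (u (i + 1))) (f (u i))
            + ENNReal.ofReal B * edist (g (u (i + 1))) (g (u i))) :=
          Finset.sum_le_sum (fun i _ => step i)
      _ = ENNReal.ofReal A * ∑ i ∈ Finset.range n, edist (f (u (i + 1))) (f (u i))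
            + ENNReal.ofReal B * ∑ i ∈ Finset.range n, edist (g (u (i + 1))) (g (u i)) := by
          rw [Finset.sum_add_distrib, Finset.mul_sum, Finset.mul_sum]
      _ ≤ ENNReal.ofReal A * eVariationOn f s + ENNReal.ofReal B * eVariationOn g s := by
          gcongr
          · exact eVariationOn.sum_le (f := f) (n := n) hu us
          · exact eVariationOn.sum_le (f := g) (n := n) hu us
  refine ne_top_of_le_ne_top ?_ hle
  exact ENNReal.add_ne_top.2 ⟨ENNReal.mul_ne_top ENNReal.ofReal_ne_top hf,
    ENNReal.mul_ne_top ENNReal.ofReal_ne_top hg⟩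

lemma bv_const {s : Set ℝ} (c : ℝ) : BoundedVariationOn (fun _ => c) s := by
  have : eVariationOn (fun _ : ℝ => c) s = 0 :=
    eVariationOn.constant_on (by rintro x ⟨a, _, rfl⟩ y ⟨b, _, rfl⟩; rfl)
  simp [BoundedVariationOn, this]

lemma bv_add {f g : ℝ → ℝ} {s : Set ℝ} (hf : BoundedVariationOn f s)
    (hg : BoundedVariationOn g s) : BoundedVariationOn (fun y => f y + g y) s := by
  refine bv_combo zero_le_one zero_le_one hf hg (fun x _ y _ => ?_)
  rw [one_mul, one_mul]
  exact dist_add_add_le _ _ _ _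

lemma bv_mul {f g : ℝ → ℝ} {s : Set ℝ} {A B : ℝ} (hA : 0 ≤ A) (hB : 0 ≤ B)
    (hf : BoundedVariationOn f s) (hg : BoundedVariationOn g s)
    (hfA : ∀ x ∈ s, |f x| ≤ A) (hgB : ∀ x ∈ s, |g x| ≤ B) :
    BoundedVariationOn (fun y => f y * g y) s := by
  refine bv_combo hB hA hf hg (fun x hx y hy => ?_)
  rw [Real.dist_eq, Real.dist_eq, Real.dist_eq]
  have e : f x * g x - f y * g y = (f x - f y) * g y + f x * (g x - g y) := by ring
  have h1 : |f x * g x - f y * g y| ≤ |f x - f y| * |g y| + |f x| * |g x - g y| := by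
    rw [e]
    exact (abs_add_le _ _).trans (by rw [abs_mul, abs_mul])
  have h2 : |f x - f y| * |g y| ≤ |f x - f y| * B :=
    mul_le_mul_of_nonneg_left (hgB y hy) (abs_nonneg _)
  have h3 : |f x| * |g x - g y| ≤ A * |g x - g y| :=
    mul_le_mul_of_nonneg_right (hfA x hx) (abs_nonneg _)
  have h4 : |f x - f y| * B = B * |f x - f y| := mul_comm _ _
  linarith

lemma bv_sum {ι : Type*} (t : Finset ι) (F : ι → ℝ → ℝ) {s : Set ℝ}
    (h : ∀ j ∈ t, BoundedVariationOn (F j) s) :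
    BoundedVariationOn (fun y => ∑ j ∈ t, F j y) s := by
  classical
  induction t using Finset.induction with
  | empty => simpa using bv_const (s := s) 0
  | @insert a t ha ih =>
      have : (fun y => ∑ j ∈ insert a t, F j y)
          = fun y => F a y + ∑ j ∈ t, F j y := by
        funext y
        rw [Finset.sum_insert ha]
      rw [this]
      exact bv_add (h a (Finset.mem_insert_self _ _))
        (ih (fun j hj => h j (Finset.mem_insert_of_mem hj)))

lemma bv_bound {h : ℝ → ℝ} (hh : BoundedVariationOn h (Set.Icc (0:ℝ) 1)) :
    ∃ A : ℝ, 0 ≤ A ∧ ∀ x ∈ Set.Icc (0:ℝ) 1, |h x| ≤ A := by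
  refine ⟨|h 0| + (eVariationOn h (Set.Icc (0:ℝ) 1)).toReal, by positivity, fun x hx => ?_⟩
  have hd : dist (h x) (h 0) ≤ (eVariationOn h (Set.Icc (0:ℝ) 1)).toReal :=
    hh.dist_le hx ⟨le_refl _, zero_le_one⟩
  rw [Real.dist_eq] at hd
  calc |h x| = |h 0 + (h x - h 0)| := by ring_nf
    _ ≤ |h 0| + |h x - h 0| := abs_add_le _ _
    _ ≤ |h 0| + (eVariationOn h (Set.Icc (0:ℝ) 1)).toReal := by linarith

lemma bv_of_monotone {h : ℝ → ℝ} (hm : Monotone h) :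
    BoundedVariationOn h (Set.Icc (0:ℝ) 1) := by
  have := (hm.monotoneOn (Set.Icc (0:ℝ) 1)).eVariationOn_le
    (a := 0) (b := 1) ⟨le_refl _, zero_le_one⟩ ⟨zero_le_one, le_refl _⟩
  rw [Set.inter_self] at this
  exact (this.trans_lt ENNReal.ofReal_lt_top).ne

end Stmt12Aux

open Stmt12Aux in
theorem stmt12 (q : ℕ+ → ℝ)
    (hq_mem : ∀ i, q i ∈ Set.Ioo (0 : ℝ) 1 ∧ ∃ r : ℚ, (r : ℝ) = q i)
    (hq_inj : Function.Injective q)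
    (hq_surj : ∀ r : ℚ, (r : ℝ) ∈ Set.Ioo (0 : ℝ) 1 → ∃ i, q i = (r : ℝ))
    (k : ℕ) (hk : 0 < k) (G : Fin k → ℝ → ℝ)
    (hG : ∀ j, ContinuousOn (G j) (Set.Icc 0 1)) :
    -- `g = Σ_{j=1}^k G_j ⬝ f^j`
    (∀ x ∈ Set.Ioc (0 : ℝ) 1,
      Filter.Tendsto (fun y => ∑ j : Fin k, G j y * jumpF q y ^ ((j : ℕ) + 1)) (𝓝[<] x)
        (𝓝 (∑ j : Fin k, G j x * jumpF q x ^ ((j : ℕ) + 1)))) ∧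
    (∀ x ∈ Set.Ioo (0 : ℝ) 1,
      (∃ L : ℝ, Filter.Tendsto (fun y => ∑ j : Fin k, G j y * jumpF q y ^ ((j : ℕ) + 1))
        (𝓝[<] x) (𝓝 L)) ∧
      (∃ R : ℝ, Filter.Tendsto (fun y => ∑ j : Fin k, G j y * jumpF q y ^ ((j : ℕ) + 1))
        (𝓝[>] x) (𝓝 R))) ∧
    (∀ x ∈ Set.Icc (0 : ℝ) 1, (∀ i, q i ≠ x) →
      ContinuousWithinAt (fun y => ∑ j : Fin k, G j y * jumpF q y ^ ((j : ℕ) + 1))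
        (Set.Icc 0 1) x) ∧
    (∀ i : ℕ+,
      Filter.Tendsto (fun y => ∑ j : Fin k, G j y * jumpF q y ^ ((j : ℕ) + 1)) (𝓝[>] q i)
        (𝓝 (∑ j : Fin k, G j (q i) *
          (jumpF q (q i) + (1 / 2 : ℝ) ^ (i : ℕ)) ^ ((j : ℕ) + 1))) ∧
      Filter.Tendsto (fun y => ∑ j : Fin k, G j y * jumpF q y ^ ((j : ℕ) + 1)) (𝓝[<] q i)
        (𝓝 (∑ j : Fin k, G j (q i) * jumpF q (q i) ^ ((j : ℕ) + 1)))) ∧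
    ((∀ j, BoundedVariationOn (G j) (Set.Icc 0 1)) →
      BoundedVariationOn (fun y => ∑ j : Fin k, G j y * jumpF q y ^ ((j : ℕ) + 1))
        (Set.Icc 0 1)) := by
  -- filter inequalities
  have hleft : ∀ x : ℝ, 0 < x → x ≤ 1 → 𝓝[<] x ≤ 𝓝[Set.Icc (0:ℝ) 1] x := by
    intro x h0 h1
    rw [← nhdsWithin_Ioo_eq_nhdsLT h0]
    exact nhdsWithin_mono _ (fun y hy => ⟨hy.1.le, hy.2.le.trans h1⟩)
  have hright : ∀ x : ℝ, 0 ≤ x → x < 1 → 𝓝[>] x ≤ 𝓝[Set.Icc (0:ℝ) 1] x := by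
    intro x h0 h1
    rw [← nhdsWithin_Ioo_eq_nhdsGT h1]
    exact nhdsWithin_mono _ (fun y hy => ⟨h0.trans hy.1.le, hy.2.le⟩)
  -- generic limit combination
  have tends_sum : ∀ (l : Filter ℝ) (x L : ℝ),
      (∀ j : Fin k, Tendsto (G j) l (𝓝 (G j x))) → Tendsto (jumpF q) l (𝓝 L) →
      Tendsto (fun y => ∑ j : Fin k, G j y * jumpF q y ^ ((j : ℕ) + 1)) l
        (𝓝 (∑ j : Fin k, G j x * L ^ ((j : ℕ) + 1))) := by
    intro l x L hGl hf
    exact tendsto_finset_sum _ (fun j _ => (hGl j).mul (hf.pow _))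
  have hGtends : ∀ (j : Fin k) (x : ℝ), x ∈ Set.Icc (0:ℝ) 1 →
      Tendsto (G j) (𝓝[Set.Icc (0:ℝ) 1] x) (𝓝 (G j x)) := fun j x hx => hG j x hx
  refine ⟨?_, ?_, ?_, ?_, ?_⟩
  · -- left continuity on Ioc
    intro x hx
    exact tends_sum _ x (jumpF q x)
      (fun j => (hGtends j x ⟨hx.1.le, hx.2⟩).mono_left (hleft x hx.1 hx.2))
      (tendsto_left x)
  · -- one-sided limits exist on Ioo
    intro x hx
    constructor
    · exact ⟨_, tends_sum _ x (jumpF q x)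
        (fun j => (hGtends j x ⟨hx.1.le, hx.2.le⟩).mono_left (hleft x hx.1 hx.2.le))
        (tendsto_left x)⟩
    · exact ⟨_, tends_sum _ x _
        (fun j => (hGtends j x ⟨hx.1.le, hx.2.le⟩).mono_left (hright x hx.1.le hx.2))
        (tendsto_right x)⟩
  · -- continuity at non-rational points
    intro x hx hnx
    have hfc : Tendsto (jumpF q) (𝓝[Set.Icc (0:ℝ) 1] x) (𝓝 (jumpF q x)) :=
      (jump_continuousAt x hnx).tendsto.mono_left nhdsWithin_le_nhds
    exact tends_sum _ x (jumpF q x) (fun j => hGtends j x hx) hfc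
  · -- one-sided limits at the rationals q i
    intro i
    obtain ⟨hi0, hi1⟩ := (hq_mem i).1
    constructor
    · have := tends_sum (𝓝[>] q i) (q i) (jumpF q (q i) + (1 / 2 : ℝ) ^ (i : ℕ))
        (fun j => (hGtends j (q i) ⟨hi0.le, hi1.le⟩).mono_left (hright _ hi0.le hi1))
        (by rw [← right_val hq_inj i]; exact tendsto_right (q i))
      exact this
    · exact tends_sum _ (q i) (jumpF q (q i))
        (fun j => (hGtends j (q i) ⟨hi0.le, hi1.le⟩).mono_left (hleft _ hi0 hi1.le))
        (tendsto_left (q i))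
  · -- bounded variation
    intro hGbv
    refine bv_sum Finset.univ (fun j y => G j y * jumpF q y ^ ((j : ℕ) + 1))
      (fun j _ => ?_)
    obtain ⟨A, hA0, hA⟩ := bv_bound (hGbv j)
    set M : ℝ := ∑' i : ℕ+, (1 / 2 : ℝ) ^ (i : ℕ) with hM
    have hM0 : 0 ≤ M := tsum_nonneg (fun i => by positivity)
    have hpow_mono : Monotone (fun y => jumpF q y ^ ((j : ℕ) + 1)) := by
      intro a b hab
      exact pow_le_pow_left₀ (jump_nonneg a) (jump_mono hab) _
    refine bv_mul hA0 (pow_nonneg hM0 ((j : ℕ) + 1)) (hGbv j) (bv_of_monotone hpow_mono)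
      hA (fun x _ => ?_)
    rw [abs_of_nonneg (pow_nonneg (jump_nonneg x) _)]
    exact pow_le_pow_left₀ (jump_nonneg x) (jump_le x) _
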